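/- arXiv:2503.00423 — 5 statements merged into one kernel-verified Lean document; each statement's English description precedes it below -/
import Mathlib

section
/- Every solution (w,p) ∈ H × Y of the regularized system (⋆) with datum v ∈ Y satisfies ‖p‖_Y ≤ ‖v‖_Y / min(α, m). -/
open RealInnerProductSpace

/-- Every solution `(w, p) ∈ H × Y` of the regularized system (⋆) with
datum `v ∈ Y` satisfies `‖p‖ ≤ ‖v‖ / min (α, m)`. -/
theorem regularized_system_stability
    {H Y : Type*}
    [NormedAddCommGroup H] [InnerProductSpace ℝ H] [CompleteSpace H]
    [NormedAddCommGroup Y] [InnerProductSpace ℝ Y] [CompleteSpace Y]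
    (a₀ : H →ₗ[ℝ] H →ₗ[ℝ] ℝ) (m M : ℝ) (hm : 0 < m) (hM : 0 < M)
    (hcoer : ∀ w : H, m * ‖w‖ ^ 2 ≤ a₀ w w)
    (hbdd : ∀ w z : H, |a₀ w z| ≤ M * ‖w‖ * ‖z‖)
    (T : H →L[ℝ] Y) (α : ℝ) (hα : 0 < α) (v : Y) (w : H) (p : Y)
    (hsol₁ : ∀ z : H, a₀ w z - ⟪p, T z⟫ = 0)
    (hsol₂ : ∀ q : Y, ⟪T w, q⟫ + α * ⟪p, q⟫ = ⟪v, q⟫) :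
    ‖p‖ ≤ ‖v‖ / min α m := by
  have h1 : a₀ w w = ⟪p, T w⟫ := by have := hsol₁ w; linarith
  have h2 := hsol₂ p
  have hTwp : ⟪T w, p⟫ = a₀ w w := by rw [h1, real_inner_comm]
  have hcoer' : (0:ℝ) ≤ a₀ w w :=
    le_trans (by positivity) (hcoer w)
  have hpp : ⟪p, p⟫ = ‖p‖ ^ 2 := real_inner_self_eq_norm_sq p
  have hcs : ⟪v, p⟫ ≤ ‖v‖ * ‖p‖ := real_inner_le_norm v p
  have key : α * ‖p‖ ^ 2 ≤ ‖v‖ * ‖p‖ := by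
    rw [hTwp, hpp] at h2; linarith
  have hmin : 0 < min α m := lt_min hα hm
  rcases eq_or_ne p 0 with h | h
  · simp [h]
    positivity
  · have hp : 0 < ‖p‖ := norm_pos_iff.mpr h
    rw [le_div_iff₀ hmin]
    have hα' : α * ‖p‖ ≤ ‖v‖ := by
      have := key
      nlinarith
    calc ‖p‖ * min α m ≤ ‖p‖ * α := by
          have := min_le_left α m
          nlinarith
      _ ≤ ‖v‖ := by linarith [hα']
end

section
/- The regularized Dirichlet-to-Neumann map Λ_α(A) : Y → Y, sending v to the second component p of the unique solution (w,p) of the regularized system (⋆), is a bounded linear operator with operator norm at most 1/min(α, m). -/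
open RealInnerProductSpace

/-- The regularized Dirichlet-to-Neumann map `Λ_α(A) : Y → Y`, sending
`v` to the second component `p` of the unique solution `(w, p)` of the regularized
system (⋆), is a bounded linear operator with operator norm at most `1 / min (α, m)`. -/
theorem regularized_DtN_bounded
    {H Y : Type*}
    [NormedAddCommGroup H] [InnerProductSpace ℝ H] [CompleteSpace H]
    [NormedAddCommGroup Y] [InnerProductSpace ℝ Y] [CompleteSpace Y]
    (m α : ℝ) (hm : 0 < m) (hα : 0 < α)
    (A : H →L[ℝ] H) (hA : ∀ w : H, m * ‖w‖ ^ 2 ≤ ⟪A w, w⟫)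
    (T : H →L[ℝ] Y) :
    ∃ Λ : Y →L[ℝ] Y,
      (∀ v : Y, ∃ w : H,
        (∀ z : H, ⟪A w, z⟫ - ⟪Λ v, T z⟫ = 0) ∧
        (∀ q : Y, ⟪T w, q⟫ + α * ⟪Λ v, q⟫ = ⟪v, q⟫)) ∧
      ‖Λ‖ ≤ 1 / min α m := by
  -- bilinear form of A
  set bA : H →L[ℝ] H →L[ℝ] ℝ := (innerSL ℝ).comp A with hbA
  have hbA_apply : ∀ w z : H, bA w z = ⟪A w, z⟫ := fun w z => rfl
  have coA : IsCoercive bA := by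
    refine ⟨m, hm, fun u => ?_⟩
    rw [hbA_apply]
    calc m * ‖u‖ * ‖u‖ = m * ‖u‖ ^ 2 := by ring
    _ ≤ ⟪A u, u⟫ := hA u
  set E : H ≃L[ℝ] H := coA.continuousLinearEquivOfBilin with hE
  have hEA : ∀ u : H, E u = A u := by
    intro u
    apply ext_inner_right ℝ
    intro z
    rw [coA.continuousLinearEquivOfBilin_apply, hbA_apply]
  -- the operator B = α I + T A⁻¹ T*
  set S : Y →L[ℝ] Y :=
    α • ContinuousLinearMap.id ℝ Y +
      T ∘L (E.symm : H →L[ℝ] H) ∘L (ContinuousLinearMap.adjoint T)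
      with hS
  have hS_apply : ∀ q : Y, S q = α • q + T (E.symm (ContinuousLinearMap.adjoint T q)) := by
    intro q; rfl
  have hS_inner : ∀ q : Y, ⟪S q, q⟫ = α * ‖q‖ ^ 2 + ⟪A (E.symm (ContinuousLinearMap.adjoint T q)),
      E.symm (ContinuousLinearMap.adjoint T q)⟫ := by
    intro q
    set u := ContinuousLinearMap.adjoint T q with hu
    set w := E.symm u with hw
    have h1 : T.adjoint q = E w := by rw [hw, E.apply_symm_apply]
    rw [hS_apply]
    rw [inner_add_left, real_inner_smul_left, real_inner_self_eq_norm_sq]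
    congr 1
    calc ⟪T w, q⟫ = ⟪w, T.adjoint q⟫ := (ContinuousLinearMap.adjoint_inner_right T w q).symm
    _ = ⟪w, E w⟫ := by rw [h1]
    _ = ⟪E w, w⟫ := real_inner_comm _ _
    _ = ⟪A w, w⟫ := by rw [hEA]
  have hS_coercive : ∀ q : Y, α * ‖q‖ ^ 2 ≤ ⟪S q, q⟫ := by
    intro q
    rw [hS_inner q]
    nlinarith [hA (E.symm (ContinuousLinearMap.adjoint T q)),
      sq_nonneg ‖E.symm (ContinuousLinearMap.adjoint T q)‖, hm.le]
  set bS : Y →L[ℝ] Y →L[ℝ] ℝ := (innerSL ℝ).comp S with hbS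
  have coS : IsCoercive bS := by
    refine ⟨α, hα, fun q => ?_⟩
    have : (bS q) q = ⟪S q, q⟫ := rfl
    rw [this]
    calc α * ‖q‖ * ‖q‖ = α * ‖q‖ ^ 2 := by ring
    _ ≤ ⟪S q, q⟫ := hS_coercive q
  set L : Y ≃L[ℝ] Y := coS.continuousLinearEquivOfBilin with hL
  have hLS : ∀ q : Y, L q = S q := by
    intro q
    apply ext_inner_right ℝ
    intro z
    rw [coS.continuousLinearEquivOfBilin_apply]
    rfl
  refine ⟨(L.symm : Y →L[ℝ] Y), ?_, ?_⟩
  · intro v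
    set p : Y := L.symm v with hp
    have hSp : S p = v := by rw [← hLS, hp, L.apply_symm_apply]
    refine ⟨E.symm (ContinuousLinearMap.adjoint T p), ?_, ?_⟩
    · intro z
      have : A (E.symm (ContinuousLinearMap.adjoint T p)) = ContinuousLinearMap.adjoint T p := by
        rw [← hEA, E.apply_symm_apply]
      rw [this, ContinuousLinearMap.adjoint_inner_left]
      exact sub_self _
    · intro q
      have : T (E.symm (ContinuousLinearMap.adjoint T p)) = v - α • p := by
        have := hS_apply p
        rw [hSp] at this
        rw [eq_sub_iff_add_eq, add_comm, this]
      have hc : ((L.symm : Y →L[ℝ] Y) v) = p := rfl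
      rw [this, inner_sub_left, real_inner_smul_left, hc]
      ring
  · apply ContinuousLinearMap.opNorm_le_bound
    · positivity
    · intro v
      set p : Y := L.symm v with hp
      have hSp : S p = v := by rw [← hLS, hp, L.apply_symm_apply]
      have h1 : α * ‖p‖ ^ 2 ≤ ‖v‖ * ‖p‖ := by
        calc α * ‖p‖ ^ 2 ≤ ⟪S p, p⟫ := hS_coercive p
        _ = ⟪v, p⟫ := by rw [hSp]
        _ ≤ ‖v‖ * ‖p‖ := real_inner_le_norm v p
      have hmin : 0 < min α m := lt_min hα hm
      have h2 : min α m * ‖p‖ ^ 2 ≤ ‖v‖ * ‖p‖ :=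
        le_trans (mul_le_mul_of_nonneg_right (min_le_left α m) (sq_nonneg ‖p‖)) h1
      have hc : ((L.symm : Y →L[ℝ] Y) v) = p := rfl
      rw [hc]
      clear_value p
      rcases eq_or_lt_of_le (norm_nonneg p) with h0 | h0
      · rw [← h0]; positivity
      · have h3 : min α m * ‖p‖ ≤ ‖v‖ := by
          have h2' : (min α m * ‖p‖) * ‖p‖ ≤ ‖v‖ * ‖p‖ := by
            rw [mul_assoc, ← pow_two]; exact h2
          exact le_of_mul_le_mul_right h2' h0
        rw [div_mul_eq_mul_div, le_div_iff₀ hmin, one_mul, mul_comm]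
        exact h3
end

section
/- If (w,z) ∈ H × Y solves the adjoint system (⋆⋆) with datum v ∈ Y, then z = (Λ_α(A))* v, the Hilbert-space adjoint of the regularized Dirichlet-to-Neumann map Λ_α(A) applied to v. -/
open RealInnerProductSpace

/-- If `(w, z) ∈ H × Y` solves the adjoint system (⋆⋆) with datum
`v ∈ Y`, then `z = (Λ_α(A))* v`, the adjoint of the regularized DtN map applied to `v`. -/
theorem adjoint_system_gives_adjoint_DtN
    {H Y : Type*}
    [NormedAddCommGroup H] [InnerProductSpace ℝ H] [CompleteSpace H]
    [NormedAddCommGroup Y] [InnerProductSpace ℝ Y] [CompleteSpace Y]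
    (m α : ℝ) (hm : 0 < m) (hα : 0 < α)
    (A : H →L[ℝ] H) (hA : ∀ w : H, m * ‖w‖ ^ 2 ≤ ⟪A w, w⟫)
    (T : H →L[ℝ] Y)
    -- `Λ` is the regularized Dirichlet-to-Neumann map: for every datum `v'`, the value
    -- `Λ v'` is the second component of the (unique) solution of the system (⋆).
    (Λ : Y →L[ℝ] Y)
    (hΛ : ∀ v' : Y, ∃ w' : H,
      (∀ z' : H, ⟪A w', z'⟫ - ⟪Λ v', T z'⟫ = 0) ∧
      (∀ q : Y, ⟪T w', q⟫ + α * ⟪Λ v', q⟫ = ⟪v', q⟫))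
    (v : Y) (w : H) (z : Y)
    (hsol₁ : ∀ p : H, ⟪ContinuousLinearMap.adjoint A w, p⟫ + ⟪z, T p⟫ = 0)
    (hsol₂ : ∀ q : Y, -⟪T w, q⟫ + α * ⟪z, q⟫ = ⟪v, q⟫) :
    z = ContinuousLinearMap.adjoint Λ v := by
  apply ext_inner_right ℝ
  intro v'
  obtain ⟨w', h1, h2⟩ := hΛ v'
  have hadj : ⟪(ContinuousLinearMap.adjoint Λ) v, v'⟫ = ⟪v, Λ v'⟫ := by
    rw [ContinuousLinearMap.adjoint_inner_left]
  rw [hadj]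
  -- ⟪T w, Λ v'⟫ = -⟪z, T w'⟫
  have e1 : ⟪A w', w⟫ = ⟪Λ v', T w⟫ := by have := h1 w; linarith
  have e2 : ⟪A w', w⟫ = ⟪(ContinuousLinearMap.adjoint A) w, w'⟫ := by
    rw [ContinuousLinearMap.adjoint_inner_left, real_inner_comm]
  have e3 : ⟪(ContinuousLinearMap.adjoint A) w, w'⟫ = -⟪z, T w'⟫ := by
    have := hsol₁ w'; linarith
  have e4 : -⟪T w, Λ v'⟫ + α * ⟪z, Λ v'⟫ = ⟪v, Λ v'⟫ := hsol₂ (Λ v')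
  have e5 : ⟪T w', z⟫ + α * ⟪Λ v', z⟫ = ⟪v', z⟫ := h2 z
  have s1 : ⟪T w, Λ v'⟫ = ⟪Λ v', T w⟫ := real_inner_comm _ _
  have s2 : ⟪z, T w'⟫ = ⟪T w', z⟫ := real_inner_comm _ _
  have s3 : ⟪z, Λ v'⟫ = ⟪Λ v', z⟫ := real_inner_comm _ _
  have s3' : α * ⟪z, Λ v'⟫ = α * ⟪Λ v', z⟫ := by rw [s3]
  have s4 : ⟪z, v'⟫ = ⟪v', z⟫ := real_inner_comm _ _
  linarith
end

section
/- Let Z be a further real Hilbert space, let B : Z → H be a bounded linear operator, and set G := T ∘ A⁻¹ ∘ B : Z → Y. If (w,z) ∈ H × Y solves the adjoint system (⋆⋆) with datum v ∈ Y, then G*((Λ_α(A))* v) = -B* w, where G*, (Λ_α(A))*, and B* denote Hilbert-space adjoints. -/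
open RealInnerProductSpace

/-- Let `B : Z → H` be bounded linear and set `G := T ∘ A⁻¹ ∘ B`.
If `(w, z) ∈ H × Y` solves the adjoint system (⋆⋆) with datum `v ∈ Y`, then
`G*((Λ_α(A))* v) = -B* w`. -/
theorem adjoint_system_identity
    {H Y Z : Type*}
    [NormedAddCommGroup H] [InnerProductSpace ℝ H] [CompleteSpace H]
    [NormedAddCommGroup Y] [InnerProductSpace ℝ Y] [CompleteSpace Y]
    [NormedAddCommGroup Z] [InnerProductSpace ℝ Z] [CompleteSpace Z]
    (m α : ℝ) (hm : 0 < m) (hα : 0 < α)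
    (A : H →L[ℝ] H) (hA : ∀ w : H, m * ‖w‖ ^ 2 ≤ ⟪A w, w⟫)
    -- `Ainv` is the bounded inverse `A⁻¹` of `A`
    (Ainv : H →L[ℝ] H)
    (hAinv₁ : ∀ x : H, Ainv (A x) = x) (hAinv₂ : ∀ x : H, A (Ainv x) = x)
    (T : H →L[ℝ] Y) (B : Z →L[ℝ] H)
    -- `Λ` is the regularized Dirichlet-to-Neumann map: for every datum `v'`, the value
    -- `Λ v'` is the second component of the (unique) solution of the system (⋆).
    (Λ : Y →L[ℝ] Y)
    (hΛ : ∀ v' : Y, ∃ w' : H,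
      (∀ z' : H, ⟪A w', z'⟫ - ⟪Λ v', T z'⟫ = 0) ∧
      (∀ q : Y, ⟪T w', q⟫ + α * ⟪Λ v', q⟫ = ⟪v', q⟫))
    (v : Y) (w : H) (z : Y)
    (hsol₁ : ∀ p : H, ⟪ContinuousLinearMap.adjoint A w, p⟫ + ⟪z, T p⟫ = 0)
    (hsol₂ : ∀ q : Y, -⟪T w, q⟫ + α * ⟪z, q⟫ = ⟪v, q⟫) :
    ContinuousLinearMap.adjoint (T.comp (Ainv.comp B))
        (ContinuousLinearMap.adjoint Λ v)
      = -(ContinuousLinearMap.adjoint B w) := by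
  apply ext_inner_right ℝ
  intro ζ
  set x := Ainv (B ζ) with hx
  obtain ⟨w', h1, h2⟩ := hΛ (T x)
  have hcomp : (T.comp (Ainv.comp B)) ζ = T x := rfl
  have key1 := h1 w
  have key2 := h2 z
  have key3 := hsol₁ w'
  have key4 := hsol₁ x
  have key5 := hsol₂ (Λ (T x))
  rw [ContinuousLinearMap.adjoint_inner_left] at key3 key4
  have hAx : A x = B ζ := hAinv₂ (B ζ)
  rw [hAx] at key4
  rw [ContinuousLinearMap.adjoint_inner_left, ContinuousLinearMap.adjoint_inner_left,
    hcomp, inner_neg_left, ContinuousLinearMap.adjoint_inner_left]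
  -- goal : ⟪v, Λ (T x)⟫ = -⟪w, B ζ⟫
  have s1 : ⟪A w', w⟫ = ⟪w, A w'⟫ := real_inner_comm _ _
  have s2 : ⟪T w', z⟫ = ⟪z, T w'⟫ := real_inner_comm _ _
  have s3 : ⟪Λ (T x), z⟫ = ⟪z, Λ (T x)⟫ := real_inner_comm _ _
  have s4 : ⟪T x, z⟫ = ⟪z, T x⟫ := real_inner_comm _ _
  have s5 : ⟪T w, Λ (T x)⟫ = ⟪Λ (T x), T w⟫ := real_inner_comm _ _
  nlinarith [key1, key2, key3, key4, key5, s1, s2, s3, s4, s5]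
end

section
/- The DFP correction preserves positive definiteness: if additionally (Rx, x) > 0 for every nonzero x ∈ H, ζ ≠ 0, and (ζ, u) > 0, then ((R + δR_DFP) ξ, ξ) > 0 for every nonzero ξ ∈ H. -/
open RealInnerProductSpace

variable {H : Type*} [NormedAddCommGroup H] [InnerProductSpace ℝ H] [CompleteSpace H]

/-- The DFP correction operator:
`δR_DFP ξ = ((ξ,u)/(ζ,u))·u - ((ξ,Rζ)/(ζ,Rζ))·Rζ`. -/
noncomputable def deltaDFP (R : H →L[ℝ] H) (u ζ : H) : H →L[ℝ] H :=
  (⟪ζ, u⟫)⁻¹ • (innerSL ℝ u).smulRight u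
    - (⟪ζ, R ζ⟫)⁻¹ • (innerSL ℝ (R ζ)).smulRight (R ζ)

/-- The DFP correction preserves positive definiteness: if `R` is
positive definite, `ζ ≠ 0` and `(ζ, u) > 0`, then `R + δR_DFP` is positive definite. -/
theorem DFP_positive_definite (R : H →L[ℝ] H) (hR : IsSelfAdjoint R) (u ζ : H)
    (hζu : ⟪ζ, u⟫ ≠ 0) (hζRζ : ⟪ζ, R ζ⟫ ≠ 0)
    (hpos : ∀ x : H, x ≠ 0 → 0 < ⟪R x, x⟫) (hζ : ζ ≠ 0) (hζu' : 0 < ⟪ζ, u⟫) :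
    ∀ ξ : H, ξ ≠ 0 → 0 < ⟪(R + deltaDFP R u ζ) ξ, ξ⟫ := by
  intro ξ hξ
  have hsym := (ContinuousLinearMap.isSelfAdjoint_iff_isSymmetric.mp hR)
  have hb : (0:ℝ) < ⟪ζ, R ζ⟫ := by
    have := hpos ζ hζ
    rwa [real_inner_comm] at this
  set a : ℝ := ⟪R ξ, ξ⟫ with ha
  set b : ℝ := ⟪ζ, R ζ⟫ with hbdef
  set c : ℝ := ⟪R ζ, ξ⟫ with hc
  have hval : ⟪(R + deltaDFP R u ζ) ξ, ξ⟫
      = a + (⟪ζ, u⟫)⁻¹ * (⟪u, ξ⟫ * ⟪u, ξ⟫) - b⁻¹ * (c * c) := by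
    simp only [deltaDFP, ContinuousLinearMap.add_apply, ContinuousLinearMap.sub_apply,
      ContinuousLinearMap.smul_apply, ContinuousLinearMap.smulRight_apply, innerSL_apply_apply,
      inner_sub_left, inner_add_left, real_inner_smul_left]
    ring
  set t : ℝ := c / b with ht
  have hw : ⟪R (ξ - t • ζ), ξ - t • ζ⟫ = a - c * c / b := by
    have h1 : ⟪R ξ, ζ⟫ = c := (hsym ξ ζ).trans (real_inner_comm (R ζ) ξ)
    have h2 : ⟪R ζ, ζ⟫ = b := by rw [real_inner_comm]
    simp only [map_sub, map_smul, inner_sub_left, inner_sub_right, real_inner_smul_left,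
      real_inner_smul_right, h1, h2, ← ha, ← hc, ht]
    field_simp
    ring
  by_cases hw0 : ξ - t • ζ = 0
  · have hξt : ξ = t • ζ := by
      have := sub_eq_zero.mp hw0; exact this
    have ht0 : t ≠ 0 := by
      intro h; rw [h, zero_smul] at hξt; exact hξ hξt
    have huξ : ⟪u, ξ⟫ = t * ⟪ζ, u⟫ := by
      rw [hξt, real_inner_smul_right, real_inner_comm]
    have hac : a - c * c / b = 0 := by
      rw [← hw, hw0]; simp
    have hne : ⟪u, ξ⟫ ≠ 0 := by
      rw [huξ]; exact mul_ne_zero ht0 hζu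
    have hpos2 : (0:ℝ) < (⟪ζ, u⟫)⁻¹ * (⟪u, ξ⟫ * ⟪u, ξ⟫) :=
      mul_pos (inv_pos.mpr hζu') (mul_self_pos.mpr hne)
    have hdiv : c * c / b = b⁻¹ * (c * c) := by ring
    rw [hval]
    linarith [hac, hpos2, hdiv]
  · have hposw : 0 < a - c * c / b := by rw [← hw]; exact hpos _ hw0
    have hnn : 0 ≤ (⟪ζ, u⟫)⁻¹ * (⟪u, ξ⟫ * ⟪u, ξ⟫) :=
      mul_nonneg (inv_nonneg.mpr hζu'.le) (mul_self_nonneg _)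
    have hdiv : c * c / b = b⁻¹ * (c * c) := by ring
    rw [hval]
    linarith [hposw, hnn, hdiv]
end
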